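/- Let d > 1 and let S₁ be a connected region contained in {(ξ,η) : ξ > 0, |η|√d/ξ ≤ 1 − δ for fixed δ ∈ (0,1)} (a sector bounded away from the asymptotes). If (s₃,t₃), (s₄,t₄) ∈ S₁ satisfy s₃² − d t₃² = s₄² − d t₄² = z > 0 and |F(s₃,t₃) − F(s₄,t₄)| ≤ φ where F(ξ,η) = log|(ξ−η√d)/(ξ+η√d)|/(2 log ε), then ‖(s₃,t₃) − (s₄,t₄)‖ ≤ C(δ,d,ε)·φ·max(‖(s₃,t₃)‖, ‖(s₄,t₄)‖) for a constant C(δ,d,ε) depending only on δ, d, ε. -/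
import Mathlib


open Real

lemma key_log (x y : ℝ) (hx : 0 < x) (hy : 0 < y) (hxy : y ≤ x) :
    x - y ≤ x * (Real.log x - Real.log y) := by
  have h := Real.log_le_sub_one_of_pos (show 0 < y / x by positivity)
  rw [Real.log_div (ne_of_gt hy) (ne_of_gt hx)] at h
  have h2 : x * (Real.log y - Real.log x) ≤ y - x := by
    calc x * (Real.log y - Real.log x) ≤ x * (y / x - 1) :=
          mul_le_mul_of_nonneg_left h hx.le
      _ = y - x := by field_simp
  nlinarith [h2]

lemma sqrt_sq_add_sq_le (a b : ℝ) : Real.sqrt (a ^ 2 + b ^ 2) ≤ |a| + |b| := by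
  rw [show |a| + |b| = Real.sqrt ((|a| + |b|) ^ 2) from (Real.sqrt_sq (by positivity)).symm]
  apply Real.sqrt_le_sqrt
  nlinarith [sq_abs a, sq_abs b, mul_nonneg (abs_nonneg a) (abs_nonneg b)]

lemma key_abs (x y : ℝ) (hx : 0 < x) (hy : 0 < y) :
    |x - y| ≤ max x y * |Real.log x - Real.log y| := by
  rcases le_total y x with h | h
  · have hlog : Real.log y ≤ Real.log x := Real.log_le_log hy h
    rw [max_eq_left h, abs_of_nonneg (by linarith), abs_of_nonneg (by linarith)]
    exact key_log x y hx hy h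
  · have hlog : Real.log x ≤ Real.log y := Real.log_le_log hx h
    rw [max_eq_right h, abs_of_nonpos (by linarith), abs_of_nonpos (by linarith)]
    have := key_log y x hy hx h
    linarith

/-- Lipschitz-type bound: in a sector at angular distance `δ` from the
asymptotes, two points on the same hyperbola `ξ² − dη² = z > 0` whose
`F`-values differ by at most `φ` (where
`F(ξ,η) = log|(ξ−η√d)/(ξ+η√d)|/(2 log ε)`) are at Euclidean distance at most
`C(δ,d,ε)·φ·max(‖(s₃,t₃)‖, ‖(s₄,t₄)‖)`. -/
theorem stmt_14 (d ε δ : ℝ) (hd : 1 < d) (hε : 1 < ε) (hδ : 0 < δ) (hδ1 : δ < 1) :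
    ∃ C : ℝ, 0 < C ∧
      ∀ s₃ t₃ s₄ t₄ z φ : ℝ, 0 < s₃ → 0 < s₄ →
        |t₃| * Real.sqrt d / s₃ ≤ 1 - δ → |t₄| * Real.sqrt d / s₄ ≤ 1 - δ →
        0 < z → s₃ ^ 2 - d * t₃ ^ 2 = z → s₄ ^ 2 - d * t₄ ^ 2 = z →
        |Real.log |(s₃ - t₃ * Real.sqrt d) / (s₃ + t₃ * Real.sqrt d)| / (2 * Real.log ε)
          - Real.log |(s₄ - t₄ * Real.sqrt d) / (s₄ + t₄ * Real.sqrt d)| / (2 * Real.log ε)|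
          ≤ φ →
        Real.sqrt ((s₃ - s₄) ^ 2 + (t₃ - t₄) ^ 2) ≤
          C * φ * max (Real.sqrt (s₃ ^ 2 + t₃ ^ 2)) (Real.sqrt (s₄ ^ 2 + t₄ ^ 2)) := by
  have hr : (1:ℝ) < Real.sqrt d := by
    rw [show (1:ℝ) = Real.sqrt 1 by simp]
    exact Real.sqrt_lt_sqrt zero_le_one hd
  set r := Real.sqrt d with hrdef
  have hr0 : (0:ℝ) < r := lt_trans one_pos hr
  have hr2 : r ^ 2 = d := Real.sq_sqrt (by linarith)
  have hlogε : 0 < Real.log ε := Real.log_pos hε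
  refine ⟨4 * Real.log ε, by positivity, ?_⟩
  intro s₃ t₃ s₄ t₄ z φ hs₃ hs₄ hsec₃ hsec₄ hz hq₃ hq₄ hF
  set u₃ := s₃ - t₃ * r with hu₃def
  set v₃ := s₃ + t₃ * r with hv₃def
  set u₄ := s₄ - t₄ * r with hu₄def
  set v₄ := s₄ + t₄ * r with hv₄def
  -- sector bounds
  have ht₃ : |t₃| * r ≤ (1 - δ) * s₃ := (div_le_iff₀ hs₃).mp hsec₃
  have ht₄ : |t₄| * r ≤ (1 - δ) * s₄ := (div_le_iff₀ hs₄).mp hsec₄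
  have habs₃ := abs_le.mp (show |t₃ * r| ≤ (1 - δ) * s₃ by
    rw [abs_mul, abs_of_pos hr0]; exact ht₃)
  have habs₄ := abs_le.mp (show |t₄ * r| ≤ (1 - δ) * s₄ by
    rw [abs_mul, abs_of_pos hr0]; exact ht₄)
  have hu₃pos : 0 < u₃ := by rw [hu₃def]; linarith [habs₃.2, mul_pos hδ hs₃]
  have hv₃pos : 0 < v₃ := by rw [hv₃def]; linarith [habs₃.1, mul_pos hδ hs₃]
  have hu₄pos : 0 < u₄ := by rw [hu₄def]; linarith [habs₄.2, mul_pos hδ hs₄]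
  have hv₄pos : 0 < v₄ := by rw [hv₄def]; linarith [habs₄.1, mul_pos hδ hs₄]
  -- hyperbola
  have huv₃ : u₃ * v₃ = z := by
    rw [hu₃def, hv₃def]
    calc (s₃ - t₃ * r) * (s₃ + t₃ * r) = s₃ ^ 2 - r ^ 2 * t₃ ^ 2 := by ring
      _ = z := by rw [hr2]; linarith [hq₃]
  have huv₄ : u₄ * v₄ = z := by
    rw [hu₄def, hv₄def]
    calc (s₄ - t₄ * r) * (s₄ + t₄ * r) = s₄ ^ 2 - r ^ 2 * t₄ ^ 2 := by ring
      _ = z := by rw [hr2]; linarith [hq₄]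
  -- F values
  have hF3 : Real.log |u₃ / v₃| = Real.log u₃ - Real.log v₃ := by
    rw [abs_div, abs_of_pos hu₃pos, abs_of_pos hv₃pos,
      Real.log_div hu₃pos.ne' hv₃pos.ne']
  have hF4 : Real.log |u₄ / v₄| = Real.log u₄ - Real.log v₄ := by
    rw [abs_div, abs_of_pos hu₄pos, abs_of_pos hv₄pos,
      Real.log_div hu₄pos.ne' hv₄pos.ne']
  rw [hF3, hF4] at hF
  have h2ε : (0:ℝ) < 2 * Real.log ε := by positivity
  have hAB : |(Real.log u₃ - Real.log v₃) - (Real.log u₄ - Real.log v₄)|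
      ≤ 2 * Real.log ε * φ := by
    rw [div_sub_div_same, abs_div, abs_of_pos h2ε, div_le_iff₀ h2ε] at hF
    linarith [hF]
  have hlz₃ : Real.log u₃ + Real.log v₃ = Real.log z := by
    rw [← Real.log_mul hu₃pos.ne' hv₃pos.ne', huv₃]
  have hlz₄ : Real.log u₄ + Real.log v₄ = Real.log z := by
    rw [← Real.log_mul hu₄pos.ne' hv₄pos.ne', huv₄]
  have hAB2 : (Real.log u₃ - Real.log v₃) - (Real.log u₄ - Real.log v₄)
      = 2 * (Real.log u₃ - Real.log u₄) := by linarith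
  rw [hAB2, abs_mul, abs_two] at hAB
  have hu : |Real.log u₃ - Real.log u₄| ≤ Real.log ε * φ := by linarith
  have hv : |Real.log v₃ - Real.log v₄| ≤ Real.log ε * φ := by
    have hrel : Real.log v₃ - Real.log v₄ = -(Real.log u₃ - Real.log u₄) := by linarith
    rw [hrel, abs_neg]; exact hu
  set ψ := Real.log ε * φ with hψdef
  have hψ0 : 0 ≤ ψ := le_trans (abs_nonneg _) hu
  have hφ0 : 0 ≤ φ := by
    by_contra h
    push_neg at h
    have : ψ < 0 := by rw [hψdef]; exact mul_neg_of_pos_of_neg hlogε h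
    linarith
  set M := max s₃ s₄ with hMdef
  have hM0 : 0 < M := lt_max_of_lt_left hs₃
  -- bounds on u, v by 2M
  have hub : max u₃ u₄ ≤ 2 * M := by
    apply max_le
    · have : u₃ ≤ 2 * s₃ := by rw [hu₃def]; linarith [habs₃.1, mul_pos hδ hs₃]
      linarith [le_max_left s₃ s₄]
    · have : u₄ ≤ 2 * s₄ := by rw [hu₄def]; linarith [habs₄.1, mul_pos hδ hs₄]
      linarith [le_max_right s₃ s₄]
  have hvb : max v₃ v₄ ≤ 2 * M := by
    apply max_le
    · have : v₃ ≤ 2 * s₃ := by rw [hv₃def]; linarith [habs₃.2, mul_pos hδ hs₃]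
      linarith [le_max_left s₃ s₄]
    · have : v₄ ≤ 2 * s₄ := by rw [hv₄def]; linarith [habs₄.2, mul_pos hδ hs₄]
      linarith [le_max_right s₃ s₄]
  have hdu : |u₃ - u₄| ≤ 2 * M * ψ := by
    calc |u₃ - u₄| ≤ max u₃ u₄ * |Real.log u₃ - Real.log u₄| :=
          key_abs u₃ u₄ hu₃pos hu₄pos
      _ ≤ 2 * M * ψ := by
          apply mul_le_mul hub hu (abs_nonneg _) (by positivity)
  have hdv : |v₃ - v₄| ≤ 2 * M * ψ := by
    calc |v₃ - v₄| ≤ max v₃ v₄ * |Real.log v₃ - Real.log v₄| :=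
          key_abs v₃ v₄ hv₃pos hv₄pos
      _ ≤ 2 * M * ψ := by
          apply mul_le_mul hvb hv (abs_nonneg _) (by positivity)
  have hdu' := abs_le.mp hdu
  have hdv' := abs_le.mp hdv
  have hds : |s₃ - s₄| ≤ 2 * M * ψ := by
    rw [abs_le]
    constructor <;> linarith [hu₃def, hv₃def, hu₄def, hv₄def]
  have hdt : |t₃ - t₄| ≤ 2 * M * ψ := by
    have hkey : 2 * r * (t₃ - t₄) = (v₃ - v₄) - (u₃ - u₄) := by
      rw [hu₃def, hv₃def, hu₄def, hv₄def]; ring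
    have h3 : |2 * r * (t₃ - t₄)| ≤ |v₃ - v₄| + |u₃ - u₄| := by
      rw [hkey]; exact abs_sub _ _
    have h4 : |2 * r * (t₃ - t₄)| = 2 * r * |t₃ - t₄| := by
      rw [abs_mul, abs_of_pos (by linarith : (0:ℝ) < 2 * r)]
    have h5 : 2 * |t₃ - t₄| ≤ 2 * r * |t₃ - t₄| := by
      have := mul_le_mul_of_nonneg_right hr.le (abs_nonneg (t₃ - t₄))
      linarith
    linarith [h3, h4 ▸ h3]
  have hfin := sqrt_sq_add_sq_le (s₃ - s₄) (t₃ - t₄)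
  have hMnorm : M ≤ max (Real.sqrt (s₃ ^ 2 + t₃ ^ 2)) (Real.sqrt (s₄ ^ 2 + t₄ ^ 2)) := by
    apply max_le_max
    · rw [Real.le_sqrt hs₃.le (by positivity)]; linarith [sq_nonneg t₃]
    · rw [Real.le_sqrt hs₄.le (by positivity)]; linarith [sq_nonneg t₄]
  calc Real.sqrt ((s₃ - s₄) ^ 2 + (t₃ - t₄) ^ 2) ≤ |s₃ - s₄| + |t₃ - t₄| := hfin
    _ ≤ 4 * M * ψ := by linarith
    _ = 4 * Real.log ε * φ * M := by rw [hψdef]; ring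
    _ ≤ 4 * Real.log ε * φ * max (Real.sqrt (s₃ ^ 2 + t₃ ^ 2)) (Real.sqrt (s₄ ^ 2 + t₄ ^ 2)) := by
        apply mul_le_mul_of_nonneg_left hMnorm (by positivity)
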